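/- arXiv:0810.2130 — 3 statements merged into one kernel-verified Lean document; each statement's English description precedes it below -/
import Mathlib

section
/- Let g be a Lie algebra over a field k of characteristic 0 and r ∈ g ⊗ g a solution of the classical Yang–Baxter equation [r₁₂, r₁₃] + [r₁₂, r₂₃] + [r₁₃, r₂₃] = 0 such that r + r^op is g-invariant. Then the map δ: g → g ⊗ g defined by δ(x) = [r, x ⊗ 1 + 1 ⊗ x] gives g the structure of a Lie bialgebra. -/
/- STATEMENT 2: Let g be a Lie algebra over a field k of characteristic 0 and
r ∈ g ⊗ g a solution of the classical Yang–Baxter equation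
[r₁₂,r₁₃] + [r₁₂,r₂₃] + [r₁₃,r₂₃] = 0 such that r + r^op is g-invariant.
Then δ(x) = [r, x⊗1 + 1⊗x] gives g the structure of a Lie bialgebra
(δ is co-skew-symmetric, satisfies the cocycle condition and the co-Jacobi
identity, i.e. δ* is a Lie bracket on g*). -/

open TensorProduct

variable (k : Type*) [Field k] [CharZero k]
variable (L : Type*) [LieRing L] [LieAlgebra k L]

attribute [local instance 100] LieRing.ofAssociativeRing

/-- The Lie bracket of `L` as a linear map `L →ₗ End L`. -/
noncomputable def lieBr : L →ₗ[k] Module.End k L := (LieAlgebra.ad k L).toLinearMap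

/-- The Lie bracket as a linear map on the tensor square. -/
noncomputable def liftBr : L ⊗[k] L →ₗ[k] L := TensorProduct.lift (lieBr k L)

/-- `(a⊗b)⊗(c⊗d) ↦ ⁅a,c⁆⊗b⊗d`, i.e. `φ⊗ψ ↦ [φ₁₂, ψ₁₃]` for `φ,ψ ∈ g⊗g ⊆ U(g)⊗U(g)`. -/
noncomputable def t1 : (L ⊗[k] L) ⊗[k] (L ⊗[k] L) →ₗ[k] L ⊗[k] (L ⊗[k] L) :=
  (TensorProduct.map (liftBr k L) LinearMap.id) ∘ₗ
    (TensorProduct.tensorTensorTensorComm k L L L L).toLinearMap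

/-- `(a⊗b)⊗(c⊗d) ↦ a⊗⁅b,c⁆⊗d`, i.e. `φ⊗ψ ↦ [φ₁₂, ψ₂₃]`. -/
noncomputable def t2 : (L ⊗[k] L) ⊗[k] (L ⊗[k] L) →ₗ[k] L ⊗[k] (L ⊗[k] L) :=
  (LinearMap.lTensor L ((LinearMap.rTensor L (liftBr k L)) ∘ₗ
      (TensorProduct.assoc k L L L).symm.toLinearMap)) ∘ₗ
    (TensorProduct.assoc k L L (L ⊗[k] L)).toLinearMap

/-- `(a⊗b)⊗(c⊗d) ↦ a⊗c⊗⁅b,d⁆`, i.e. `φ⊗ψ ↦ [φ₁₃, ψ₂₃]`. -/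
noncomputable def t3 : (L ⊗[k] L) ⊗[k] (L ⊗[k] L) →ₗ[k] L ⊗[k] (L ⊗[k] L) :=
  (LinearMap.lTensor L (LinearMap.lTensor L (liftBr k L))) ∘ₗ
    (TensorProduct.assoc k L L (L ⊗[k] L)).toLinearMap ∘ₗ
    (TensorProduct.tensorTensorTensorComm k L L L L).toLinearMap

/-- The classical Yang–Baxter equation `[r₁₂,r₁₃]+[r₁₂,r₂₃]+[r₁₃,r₂₃] = 0`
(all terms lie in `g⊗g⊗g ⊆ U(g)^{⊗3}`). -/
def IsCYBE (r : L ⊗[k] L) : Prop :=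
  t1 k L (r ⊗ₜ r) + t2 k L (r ⊗ₜ r) + t3 k L (r ⊗ₜ r) = 0

/-- `x ↦ (ad x ⊗ 1 + 1 ⊗ ad x)`, the adjoint action on the tensor square;
`adT x t = [x⊗1 + 1⊗x, t]` in `U(g)⊗U(g)`. -/
noncomputable def adT : L →ₗ[k] (L ⊗[k] L →ₗ[k] L ⊗[k] L) :=
  ((LinearMap.rTensorHom L).comp (lieBr k L)) + ((LinearMap.lTensorHom L).comp (lieBr k L))

/-- `t ∈ g⊗g` is `g`-invariant: `[x⊗1 + 1⊗x, t] = 0` for all `x`. -/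
def LieInvariantElem (t : L ⊗[k] L) : Prop := ∀ x : L, adT k L x t = 0

/-- The flip `r^op` of `r`. -/
noncomputable def rop (r : L ⊗[k] L) : L ⊗[k] L := (TensorProduct.comm k L L) r

/-- The coboundary cobracket `δ(x) = [r, x⊗1 + 1⊗x] = -(ad x ⊗ 1 + 1 ⊗ ad x)(r)`. -/
noncomputable def cob (r : L ⊗[k] L) : L →ₗ[k] L ⊗[k] L :=
  -((LinearMap.applyₗ r) ∘ₗ (adT k L))

/-- The cyclic permutation `a⊗(b⊗c) ↦ b⊗(c⊗a)` on the triple tensor product. -/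
noncomputable def cyc : L ⊗[k] (L ⊗[k] L) →ₗ[k] L ⊗[k] (L ⊗[k] L) :=
  (TensorProduct.assoc k L L L).toLinearMap ∘ₗ (TensorProduct.comm k L (L ⊗[k] L)).toLinearMap

/-- `δ` is co-skew-symmetric, i.e. takes values in `Λ²g ⊆ g⊗g`. -/
def IsCoSkew (D : L →ₗ[k] L ⊗[k] L) : Prop :=
  ∀ x : L, (TensorProduct.comm k L L) (D x) = - D x

/-- The 1-cocycle condition
`δ([x,y]) = [δ(x), y⊗1+1⊗y] + [x⊗1+1⊗x, δ(y)]`. -/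
def IsCocycle (D : L →ₗ[k] L ⊗[k] L) : Prop :=
  ∀ x y : L, D ⁅x, y⁆ = adT k L x (D y) - adT k L y (D x)

/-- The co-Jacobi identity: the cyclic sum of `(1⊗δ)∘δ` vanishes;
equivalently `δ*` is a Lie bracket on `g*`. -/
def IsCoJacobi (D : L →ₗ[k] L ⊗[k] L) : Prop :=
  ∀ x : L,
    (LinearMap.lTensor L D) (D x) + cyc k L ((LinearMap.lTensor L D) (D x)) +
      cyc k L (cyc k L ((LinearMap.lTensor L D) (D x))) = 0

/-- `D` is a Lie bialgebra cobracket on `L`. -/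
def IsLieCobracket (D : L →ₗ[k] L ⊗[k] L) : Prop :=
  IsCoSkew k L D ∧ IsCocycle k L D ∧ IsCoJacobi k L D

/- Write `r = ρ + t` with `ρ = (r - r^op)/2` antisymmetric and `t = (r + r^op)/2` invariant;
then `δ` only depends on `ρ`. Co-skewness (by invariance of `r + r^op`) and the cocycle identity
are immediate from `δ(x) = -x·r`. For antisymmetric `ρ`, the cyclic sum of `(1 ⊗ δ)(δ x)` equals
`x·[[ρ,ρ]]`, where `[[·,·]]` is the Yang–Baxter expression: both sides are rewritten through
`[ρ₁₂, ρ₁₃]` and compared in the group algebra of `S₃` acting on `g^{⊗3}`. Finally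
`[[r,r]] = [[ρ,ρ]] + [[t,t]]`, because the cross terms cancel by invariance of `t` and
antisymmetry of `ρ`, and `x·[[t,t]] = 0` by equivariance of `[[·,·]]`; hence
`x·[[ρ,ρ]] = x·[[r,r]] = 0`. -/

section CoboundaryCobracket

open LinearMap

variable (k : Type*) [Field k] (L : Type*) [LieRing L] [LieAlgebra k L]

noncomputable def swap23 : L ⊗[k] (L ⊗[k] L) →ₗ[k] L ⊗[k] (L ⊗[k] L) :=
  lTensor L (TensorProduct.comm k L L).toLinearMap

noncomputable def cyclicSum : L ⊗[k] (L ⊗[k] L) →ₗ[k] L ⊗[k] (L ⊗[k] L) :=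
  LinearMap.id + cyc k L + cyc k L ∘ₗ cyc k L

noncomputable def adT3 (x : L) : L ⊗[k] (L ⊗[k] L) →ₗ[k] L ⊗[k] (L ⊗[k] L) :=
  rTensor (L ⊗[k] L) (LieAlgebra.ad k L x) + lTensor L (adT k L x)

noncomputable def cybe : (L ⊗[k] L) ⊗[k] (L ⊗[k] L) →ₗ[k] L ⊗[k] (L ⊗[k] L) :=
  t1 k L + t2 k L + t3 k L

variable {k L}

@[simp] lemma liftBr_tmul (a b : L) : liftBr k L (a ⊗ₜ b) = ⁅a, b⁆ := by
  simp [liftBr, lieBr]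

@[simp] lemma adT_tmul (x a b : L) : adT k L x (a ⊗ₜ b) = ⁅x, a⁆ ⊗ₜ b + a ⊗ₜ ⁅x, b⁆ := by
  simp [adT, lieBr]

@[simp] lemma t1_tmul (a b c d : L) :
    t1 k L ((a ⊗ₜ b) ⊗ₜ (c ⊗ₜ d)) = ⁅a, c⁆ ⊗ₜ (b ⊗ₜ d) := by
  simp [t1]

@[simp] lemma t2_tmul (a b c d : L) :
    t2 k L ((a ⊗ₜ b) ⊗ₜ (c ⊗ₜ d)) = a ⊗ₜ (⁅b, c⁆ ⊗ₜ d) := by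
  simp [t2]

@[simp] lemma t3_tmul (a b c d : L) :
    t3 k L ((a ⊗ₜ b) ⊗ₜ (c ⊗ₜ d)) = a ⊗ₜ (c ⊗ₜ ⁅b, d⁆) := by
  simp [t3]

@[simp] lemma cyc_tmul (a b c : L) : cyc k L (a ⊗ₜ (b ⊗ₜ c)) = b ⊗ₜ (c ⊗ₜ a) := by
  simp [cyc]

@[simp] lemma cob_apply (r : L ⊗[k] L) (x : L) : cob k L r x = -adT k L x r := by
  simp [cob]

lemma cob_add (r s : L ⊗[k] L) : cob k L (r + s) = cob k L r + cob k L s := by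
  ext x
  simp [add_comm]

lemma cob_eq_zero_of_invariant {t : L ⊗[k] L} (ht : LieInvariantElem k L t) : cob k L t = 0 := by
  ext x
  simp [ht x]

lemma comm_adT (x : L) (p : L ⊗[k] L) :
    TensorProduct.comm k L L (adT k L x p) = adT k L x (TensorProduct.comm k L L p) := by
  induction p using TensorProduct.induction_on with
  | zero => simp
  | tmul a b => simp [add_comm]
  | add p q hp hq => simp only [map_add, hp, hq]

lemma adT_lie (x y : L) (p : L ⊗[k] L) :
    adT k L ⁅x, y⁆ p = adT k L x (adT k L y p) - adT k L y (adT k L x p) := by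
  induction p using TensorProduct.induction_on with
  | zero => simp
  | tmul a b =>
    simp only [adT_tmul, map_add, lie_lie, TensorProduct.sub_tmul, TensorProduct.tmul_sub]
    abel
  | add p q hp hq => simp only [map_add, hp, hq]; abel

lemma isCoSkew_cob {r : L ⊗[k] L} (hr : LieInvariantElem k L (r + rop k L r)) :
    IsCoSkew k L (cob k L r) := by
  intro x
  have h := hr x
  rw [map_add, add_eq_zero_iff_neg_eq] at h
  simp only [cob_apply, map_neg, comm_adT]
  exact congrArg Neg.neg h.symm

lemma isCocycle_cob (r : L ⊗[k] L) : IsCocycle k L (cob k L r) := by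
  intro x y
  simp only [cob_apply, adT_lie, map_neg]
  abel

@[simp] lemma swap23_tmul (a b c : L) :
    swap23 k L (a ⊗ₜ (b ⊗ₜ c) : L ⊗[k] (L ⊗[k] L)) = a ⊗ₜ (c ⊗ₜ b) :=
  rfl

@[simp] lemma adT3_tmul (x a b c : L) :
    adT3 k L x (a ⊗ₜ (b ⊗ₜ c) : L ⊗[k] (L ⊗[k] L)) =
      ⁅x, a⁆ ⊗ₜ (b ⊗ₜ c) + a ⊗ₜ (⁅x, b⁆ ⊗ₜ c) + a ⊗ₜ (b ⊗ₜ ⁅x, c⁆) := by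
  simp [adT3, TensorProduct.tmul_add, add_assoc]

lemma isCoJacobi_iff (D : L →ₗ[k] L ⊗[k] L) :
    IsCoJacobi k L D ↔ ∀ x, cyclicSum k L (lTensor L D (D x)) = 0 :=
  Iff.rfl

lemma isCYBE_iff (r : L ⊗[k] L) : IsCYBE k L r ↔ cybe k L (r ⊗ₜ r) = 0 :=
  Iff.rfl

lemma cyclicSum_adT3 (x : L) (w : L ⊗[k] (L ⊗[k] L)) :
    cyclicSum k L (adT3 k L x w) = adT3 k L x (cyclicSum k L w) := by
  have h : cyclicSum k L ∘ₗ adT3 k L x = adT3 k L x ∘ₗ cyclicSum k L := by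
    ext a b c
    simp [cyclicSum]
    abel
  exact congr($h w)

lemma adT3_cybe (x : L) (p q : L ⊗[k] L) :
    adT3 k L x (cybe k L (p ⊗ₜ q)) = cybe k L (adT k L x p ⊗ₜ q) + cybe k L (p ⊗ₜ adT k L x q) := by
  have h : adT3 k L x ∘ₗ cybe k L =
      cybe k L ∘ₗ (rTensor (L ⊗[k] L) (adT k L x) + lTensor (L ⊗[k] L) (adT k L x)) := by
    apply TensorProduct.ext_fourfold'
    intro a b c d
    simp [cybe, lie_lie, TensorProduct.tmul_add, TensorProduct.add_tmul, TensorProduct.tmul_sub,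
      TensorProduct.sub_tmul]
    abel
  simpa using congr($h (p ⊗ₜ q))

lemma t1_tmul_comm (p q : L ⊗[k] L) :
    t1 k L (q ⊗ₜ p) = -swap23 k L (t1 k L (p ⊗ₜ q)) := by
  have h : t1 k L ∘ₗ (TensorProduct.comm k (L ⊗[k] L) (L ⊗[k] L)).toLinearMap =
      -(swap23 k L ∘ₗ t1 k L) := by
    apply TensorProduct.ext_fourfold'
    intro a b c d
    simp only [LinearMap.coe_comp, Function.comp_apply, LinearEquiv.coe_coe,
      TensorProduct.comm_tmul, t1_tmul, LinearMap.neg_apply, swap23_tmul]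
    rw [← lie_skew a c, TensorProduct.neg_tmul, neg_neg]
  simpa using congr($h (p ⊗ₜ q))

lemma t2_eq_swap23_cyc_t1 (p q : L ⊗[k] L) :
    t2 k L (p ⊗ₜ q) = swap23 k L (cyc k L (t1 k L (TensorProduct.comm k L L p ⊗ₜ q))) := by
  have h : t2 k L = swap23 k L ∘ₗ cyc k L ∘ₗ t1 k L ∘ₗ
      rTensor (L ⊗[k] L) (TensorProduct.comm k L L).toLinearMap := by
    apply TensorProduct.ext_fourfold'
    intro a b c d
    simp
  simpa using congr($h (p ⊗ₜ q))

lemma t3_eq_cyc_t1 (p q : L ⊗[k] L) :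
    t3 k L (p ⊗ₜ q) =
      cyc k L (t1 k L (TensorProduct.comm k L L p ⊗ₜ TensorProduct.comm k L L q)) := by
  have h : t3 k L = cyc k L ∘ₗ t1 k L ∘ₗ
      TensorProduct.map (TensorProduct.comm k L L).toLinearMap
        (TensorProduct.comm k L L).toLinearMap := by
    apply TensorProduct.ext_fourfold'
    intro a b c d
    simp
  simpa using congr($h (p ⊗ₜ q))

lemma cybe_apply (w : (L ⊗[k] L) ⊗[k] (L ⊗[k] L)) :
    cybe k L w = t1 k L w + (t2 k L w + t3 k L w) :=
  add_assoc _ _ _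

lemma t2_add_t3_of_antisymm {p q : L ⊗[k] L} (hp : TensorProduct.comm k L L p = -p)
    (hq : TensorProduct.comm k L L q = -q) :
    t2 k L (p ⊗ₜ q) + t3 k L (p ⊗ₜ q) =
      ((LinearMap.id - swap23 k L) ∘ₗ cyc k L) (t1 k L (p ⊗ₜ q)) := by
  simp only [t2_eq_swap23_cyc_t1, t3_eq_cyc_t1, hp, hq, TensorProduct.neg_tmul,
    TensorProduct.tmul_neg, neg_neg, map_neg, LinearMap.comp_apply, LinearMap.sub_apply,
    LinearMap.id_apply]
  abel

lemma cyclicSum_comp_sub_swap23_comp_cyc :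
    cyclicSum k L ∘ₗ (LinearMap.id - swap23 k L) ∘ₗ cyc k L =
      (LinearMap.id + (LinearMap.id - swap23 k L) ∘ₗ cyc k L) ∘ₗ (LinearMap.id - swap23 k L) := by
  ext a b c
  simp [cyclicSum]
  abel

lemma cyclicSum_t2_add_t3 {p q : L ⊗[k] L} (hp : TensorProduct.comm k L L p = -p)
    (hq : TensorProduct.comm k L L q = -q) :
    cyclicSum k L (t2 k L (p ⊗ₜ q) + t3 k L (p ⊗ₜ q)) = cybe k L (p ⊗ₜ q) + cybe k L (q ⊗ₜ p) := by
  rw [cybe_apply, cybe_apply, t2_add_t3_of_antisymm hp hq, t2_add_t3_of_antisymm hq hp,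
    t1_tmul_comm p q, ← LinearMap.comp_apply (cyclicSum k L), cyclicSum_comp_sub_swap23_comp_cyc]
  simp only [LinearMap.comp_apply, LinearMap.add_apply, LinearMap.sub_apply, LinearMap.id_apply,
    map_sub, map_neg]
  abel

lemma t2_add_t3_tmul_left (a b : L) (q : L ⊗[k] L) :
    t2 k L ((a ⊗ₜ b) ⊗ₜ q) + t3 k L ((a ⊗ₜ b) ⊗ₜ q) = a ⊗ₜ adT k L b q := by
  induction q using TensorProduct.induction_on with
  | zero => simp
  | tmul c d => simp [TensorProduct.tmul_add]
  | add q q' hq hq' =>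
    simp only [TensorProduct.tmul_add, map_add, ← hq, ← hq']
    abel

lemma lTensor_cob_cob (x : L) (p q : L ⊗[k] L) :
    lTensor L (cob k L q) (cob k L p x) =
      adT3 k L x (t2 k L (p ⊗ₜ q) + t3 k L (p ⊗ₜ q)) -
        (t2 k L (p ⊗ₜ adT k L x q) + t3 k L (p ⊗ₜ adT k L x q)) := by
  induction p using TensorProduct.induction_on with
  | zero => simp
  | tmul a b =>
    rw [t2_add_t3_tmul_left, t2_add_t3_tmul_left]
    simp only [cob_apply, adT_tmul, adT_lie, map_add, map_neg, lTensor_tmul, adT3,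
      LinearMap.add_apply, rTensor_tmul, LieAlgebra.ad_apply, TensorProduct.tmul_sub,
      TensorProduct.tmul_neg]
    abel
  | add p p' hp hp' =>
    rw [cob_add, LinearMap.add_apply, map_add, hp, hp']
    simp only [TensorProduct.add_tmul, map_add]
    abel

lemma cyclicSum_lTensor_cob_cob {ρ : L ⊗[k] L} (hρ : TensorProduct.comm k L L ρ = -ρ) (x : L) :
    cyclicSum k L (lTensor L (cob k L ρ) (cob k L ρ x)) = adT3 k L x (cybe k L (ρ ⊗ₜ ρ)) := by
  have hxρ : TensorProduct.comm k L L (adT k L x ρ) = -adT k L x ρ := by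
    rw [comm_adT, hρ, map_neg]
  rw [lTensor_cob_cob, map_sub, cyclicSum_adT3, cyclicSum_t2_add_t3 hρ hρ,
    cyclicSum_t2_add_t3 hρ hxρ, map_add, adT3_cybe]
  abel

lemma isCoJacobi_cob {ρ : L ⊗[k] L} (hρ : TensorProduct.comm k L L ρ = -ρ)
    (h : ∀ x, adT3 k L x (cybe k L (ρ ⊗ₜ ρ)) = 0) : IsCoJacobi k L (cob k L ρ) :=
  (isCoJacobi_iff _).2 fun x => (cyclicSum_lTensor_cob_cob hρ x).trans (h x)

lemma t1_add_t2_tmul_right (t : L ⊗[k] L) (a b : L) :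
    t1 k L (t ⊗ₜ (a ⊗ₜ b)) + t2 k L (t ⊗ₜ (a ⊗ₜ b)) =
      -lTensor L ((TensorProduct.mk k L L).flip b) (adT k L a t) := by
  induction t using TensorProduct.induction_on with
  | zero => simp
  | tmul c d =>
    simp only [t1_tmul, t2_tmul, adT_tmul, map_add, lTensor_tmul, LinearMap.flip_apply,
      TensorProduct.mk_apply]
    rw [← lie_skew a c, ← lie_skew a d]
    simp only [TensorProduct.neg_tmul, TensorProduct.tmul_neg]
    abel
  | add t t' ht ht' =>
    simp only [TensorProduct.add_tmul, map_add, neg_add, ← ht, ← ht']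
    abel

lemma t1_sub_t3_tmul (a b : L) (t : L ⊗[k] L) :
    t1 k L ((a ⊗ₜ b) ⊗ₜ t) - t3 k L (t ⊗ₜ (b ⊗ₜ a)) =
      lTensor L (TensorProduct.mk k L L b) (adT k L a t) := by
  induction t using TensorProduct.induction_on with
  | zero => simp
  | tmul c d =>
    simp only [t1_tmul, t3_tmul, adT_tmul, map_add, lTensor_tmul, TensorProduct.mk_apply]
    rw [← lie_skew d a, TensorProduct.tmul_neg, TensorProduct.tmul_neg, sub_eq_add_neg, neg_neg]
  | add t t' ht ht' =>
    simp only [TensorProduct.add_tmul, TensorProduct.tmul_add, map_add, ← ht, ← ht']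
    abel

/- In `U(g)^{⊗3}`: `[p₁₂ + p₁₃, t₂₃] = 0`, `[t₁₂, p₁₃ + p₂₃] = 0` and `[t₁₃, p₁₂ + p₃₂] = 0`
for invariant `t`, which leaves `[t₁₃, p₂₃ + p₃₂]`. -/
lemma cybe_tmul_add_cybe_tmul {t : L ⊗[k] L} (ht : LieInvariantElem k L t) (p : L ⊗[k] L) :
    cybe k L (p ⊗ₜ t) + cybe k L (t ⊗ₜ p) = t3 k L (t ⊗ₜ (p + TensorProduct.comm k L L p)) := by
  induction p using TensorProduct.induction_on with
  | zero => simp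
  | tmul a b =>
    have h₁ : t1 k L ((a ⊗ₜ b) ⊗ₜ t) = t3 k L (t ⊗ₜ (b ⊗ₜ a)) := by
      rw [← sub_eq_zero, t1_sub_t3_tmul, ht a, map_zero]
    have h₂ : t2 k L ((a ⊗ₜ b) ⊗ₜ t) + t3 k L ((a ⊗ₜ b) ⊗ₜ t) = 0 := by
      rw [t2_add_t3_tmul_left, ht b, TensorProduct.tmul_zero]
    have h₃ : t1 k L (t ⊗ₜ (a ⊗ₜ b)) + t2 k L (t ⊗ₜ (a ⊗ₜ b)) = 0 := by
      rw [t1_add_t2_tmul_right, ht a, map_zero, neg_zero]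
    rw [cybe_apply, cybe_apply, TensorProduct.comm_tmul, TensorProduct.tmul_add, map_add, h₁]
    linear_combination (norm := abel) h₂ + h₃
  | add p p' hp hp' =>
    simp only [TensorProduct.add_tmul, TensorProduct.tmul_add, map_add] at hp hp' ⊢
    rw [add_add_add_comm, hp, hp']
    abel

lemma adT3_cybe_add_invariant {ρ t : L ⊗[k] L} (hρ : TensorProduct.comm k L L ρ = -ρ)
    (ht : LieInvariantElem k L t) (x : L) :
    adT3 k L x (cybe k L ((ρ + t) ⊗ₜ (ρ + t))) = adT3 k L x (cybe k L (ρ ⊗ₜ ρ)) := by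
  have hcross : cybe k L (ρ ⊗ₜ t) + cybe k L (t ⊗ₜ ρ) = 0 := by
    rw [cybe_tmul_add_cybe_tmul ht, hρ, add_neg_cancel, TensorProduct.tmul_zero, map_zero]
  have hinv : adT3 k L x (cybe k L (t ⊗ₜ t)) = 0 := by
    rw [adT3_cybe, ht x, TensorProduct.zero_tmul, TensorProduct.tmul_zero, map_zero, add_zero]
  have hexpand : cybe k L ((ρ + t) ⊗ₜ (ρ + t)) =
      cybe k L (ρ ⊗ₜ ρ) + (cybe k L (ρ ⊗ₜ t) + cybe k L (t ⊗ₜ ρ)) + cybe k L (t ⊗ₜ t) := by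
    simp only [TensorProduct.add_tmul, TensorProduct.tmul_add, map_add]
    abel
  rw [hexpand, hcross, add_zero, map_add, hinv, add_zero]

lemma exists_eq_antisymm_add_invariant [NeZero (2 : k)] {r : L ⊗[k] L}
    (hr : LieInvariantElem k L (r + rop k L r)) :
    ∃ ρ t : L ⊗[k] L, r = ρ + t ∧ TensorProduct.comm k L L ρ = -ρ ∧ LieInvariantElem k L t := by
  refine ⟨(2 : k)⁻¹ • (r - rop k L r), (2 : k)⁻¹ • (r + rop k L r), ?_, ?_, ?_⟩
  · match_scalars <;> field_simp <;> ring
  · simp only [map_smul, map_sub, rop, TensorProduct.comm_comm]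
    module
  · intro x
    rw [map_smul, hr x, smul_zero]

end CoboundaryCobracket

theorem stmt2 (r : L ⊗[k] L) (hCYBE : IsCYBE k L r)
    (hinv : LieInvariantElem k L (r + rop k L r)) :
    IsLieCobracket k L (cob k L r) := by
  obtain ⟨ρ, t, rfl, hρ, ht⟩ := exists_eq_antisymm_add_invariant hinv
  refine ⟨isCoSkew_cob hinv, isCocycle_cob _, ?_⟩
  rw [cob_add, cob_eq_zero_of_invariant ht, add_zero]
  refine isCoJacobi_cob hρ fun x => ?_
  rw [← adT3_cybe_add_invariant hρ ht, (isCYBE_iff _).1 hCYBE, map_zero]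
end

section
/- Let (g, [·,·], δ) be a Lie bialgebra over a field k of characteristic 0. Extending δ from g to the universal enveloping algebra U(g) by the co-Leibniz rule δ(ab) = δ(a)Δ(b) + Δ(a)δ(b) gives U(g) the structure of a co-Poisson Hopf algebra; in particular the extended δ is well-defined, co-skew-symmetric, satisfies the co-Jacobi identity, and is compatible with the standard comultiplication of U(g). -/
/- STATEMENT 4: Let (g, [·,·], δ) be a Lie bialgebra over a field k of
characteristic 0.  Extending δ from g to U(g) by the co-Leibniz rule
δ(ab) = δ(a)Δ(b) + Δ(a)δ(b) gives U(g) the structure of a co-Poisson Hopf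
algebra: the extension D is well-defined, co-skew-symmetric, satisfies the
co-Jacobi identity and is compatible with the standard comultiplication Δ of
U(g) (the algebra map determined by Δ(x) = x⊗1 + 1⊗x for x ∈ g). -/

open TensorProduct

attribute [local instance] LieRing.ofAssociativeRing

variable (k : Type*) [Field k] [CharZero k]
variable (L : Type*) [LieRing L] [LieAlgebra k L]

/-!
Derivations `U(g) → B` along an algebra map `Φ` are the same as algebra maps `U(g) → B ⊕ Bε`
(`ε² = 0`) lifting `Φ`. Hence they are determined by their values on `g`, and a linear map
`d : g → B` extends to one as soon as `x ↦ Φ x + (d x) ε` is a Lie map; for `Φ = Δ` and `d = δ`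
this is the cocycle identity. Each remaining identity is checked on `g` after showing that both
sides are derivations along the same algebra map: `Δ` for co-skew-symmetry (by cocommutativity),
`Δ₃ = (1 ⊗ Δ) Δ` for the co-Leibniz rule (by coassociativity and the symmetry of `Δ₃`). For
co-Jacobi, `(1 ⊗ D) D` is a derivation along `Δ₃` only up to a cross term in `(D ⊗ 1) Δ`, which
cancels in the cyclic sum; so the cyclic sum is a derivation, and on `g` it vanishes by the
co-Jacobi identity of `δ`.
-/

section DerivationAlong

variable {R A A' B C : Type*} [CommRing R] [Ring A] [Ring A'] [Ring B] [Ring C]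
  [Algebra R A] [Algebra R A'] [Algebra R B] [Algebra R C]

def IsDerivationAlong (Φ : A →ₐ[R] B) (f : A →ₗ[R] B) : Prop :=
  ∀ a b, f (a * b) = f a * Φ b + Φ a * f b

namespace IsDerivationAlong

variable {Φ : A →ₐ[R] B} {f g : A →ₗ[R] B}

theorem map_one (hf : IsDerivationAlong Φ f) : f 1 = 0 := by
  simpa using hf 1 1

theorem zero : IsDerivationAlong Φ (0 : A →ₗ[R] B) := fun a b => by simp

theorem add (hf : IsDerivationAlong Φ f) (hg : IsDerivationAlong Φ g) :
    IsDerivationAlong Φ (f + g) := fun a b => by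
  simp only [LinearMap.add_apply, hf a b, hg a b, add_mul, mul_add]
  abel

theorem neg (hf : IsDerivationAlong Φ f) : IsDerivationAlong Φ (-f) := fun a b => by
  simp only [LinearMap.neg_apply, hf a b, neg_add, neg_mul, mul_neg]

theorem algHom_comp (hf : IsDerivationAlong Φ f) (ψ : B →ₐ[R] C) :
    IsDerivationAlong (ψ.comp Φ) (ψ.toLinearMap ∘ₗ f) := fun a b => by
  simp [hf a b]

theorem comp_algHom (hf : IsDerivationAlong Φ f) (ψ : A' →ₐ[R] A) :
    IsDerivationAlong (Φ.comp ψ) (f ∘ₗ ψ.toLinearMap) := fun a b => by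
  simp [hf (ψ a) (ψ b)]

theorem lTensor (hf : IsDerivationAlong Φ f) :
    IsDerivationAlong (Algebra.TensorProduct.map (AlgHom.id R C) Φ) (f.lTensor C) := by
  intro s t
  induction s with
  | zero => simp
  | add s s' hs hs' => simp only [add_mul, map_add, hs, hs']; abel
  | tmul c a =>
    induction t with
    | zero => simp
    | add t t' ht ht' => simp only [mul_add, map_add, ht, ht']; abel
    | tmul c' a' => simp [hf a a', TensorProduct.tmul_add, Algebra.TensorProduct.tmul_mul_tmul]

theorem rTensor (hf : IsDerivationAlong Φ f) :
    IsDerivationAlong (Algebra.TensorProduct.map Φ (AlgHom.id R C)) (f.rTensor C) := by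
  intro s t
  induction s with
  | zero => simp
  | add s s' hs hs' => simp only [add_mul, map_add, hs, hs']; abel
  | tmul a c =>
    induction t with
    | zero => simp
    | add t t' ht ht' => simp only [mul_add, map_add, ht, ht']; abel
    | tmul a' c' => simp [hf a a', TensorProduct.add_tmul, Algebra.TensorProduct.tmul_mul_tmul]

noncomputable def toTrivSqZeroExt (hf : IsDerivationAlong Φ f) : A →ₐ[R] TrivSqZeroExt B B where
  toFun a := TrivSqZeroExt.inl (Φ a) + TrivSqZeroExt.inr (f a)
  map_one' := by ext <;> simp [hf.map_one]
  map_mul' a b := by ext <;> simp [hf a b, add_comm]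
  map_zero' := by ext <;> simp
  map_add' a b := by ext <;> simp
  commutes' r := by
    ext <;> simp [Algebra.algebraMap_eq_smul_one, hf.map_one]

theorem snd_toTrivSqZeroExt (hf : IsDerivationAlong Φ f) (a : A) :
    (hf.toTrivSqZeroExt a).snd = f a :=
  zero_add _

end IsDerivationAlong

end DerivationAlong

section Enveloping

open UniversalEnvelopingAlgebra

variable {R 𝔤 B : Type*} [CommRing R] [LieRing 𝔤] [LieAlgebra R 𝔤] [Ring B] [Algebra R B]
  {Φ : UniversalEnvelopingAlgebra R 𝔤 →ₐ[R] B}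

theorem algHom_ext_ι {F G : UniversalEnvelopingAlgebra R 𝔤 →ₐ[R] B}
    (h : ∀ x, F (ι R x) = G (ι R x)) : F = G :=
  hom_ext R (LieHom.ext h)

theorem IsDerivationAlong.ext_ι {f g : UniversalEnvelopingAlgebra R 𝔤 →ₗ[R] B}
    (hf : IsDerivationAlong Φ f) (hg : IsDerivationAlong Φ g) (h : ∀ x, f (ι R x) = g (ι R x)) :
    f = g := by
  have hF : hf.toTrivSqZeroExt = hg.toTrivSqZeroExt := algHom_ext_ι fun x =>
    congr_arg (TrivSqZeroExt.inl (Φ (ι R x)) + TrivSqZeroExt.inr ·) (h x)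
  ext u
  simpa only [IsDerivationAlong.snd_toTrivSqZeroExt] using
    congr_arg TrivSqZeroExt.snd (DFunLike.congr_fun hF u)

theorem exists_isDerivationAlong_ι_eq (d : 𝔤 →ₗ[R] B)
    (hd : ∀ x y, d ⁅x, y⁆ = ⁅Φ (ι R x), d y⁆ - ⁅Φ (ι R y), d x⁆) :
    ∃ f, IsDerivationAlong Φ f ∧ ∀ x, f (ι R x) = d x := by
  let φ : 𝔤 →ₗ⁅R⁆ TrivSqZeroExt B B :=
    { toFun x := TrivSqZeroExt.inl (Φ (ι R x)) + TrivSqZeroExt.inr (d x)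
      map_add' x y := by ext <;> simp
      map_smul' c x := by ext <;> simp
      map_lie' {x y} := by
        ext
        · simp [LieRing.of_associative_ring_bracket]
        · simp [hd, LieRing.of_associative_ring_bracket]
          abel }
  let F := lift R φ
  have hF : ∀ u, (F u).fst = Φ u := DFunLike.congr_fun <|
    show (TrivSqZeroExt.fstHom R B B).comp F = Φ from algHom_ext_ι fun x => by simp [F, φ]
  refine ⟨{ toFun u := (F u).snd, map_add' _ _ := by simp, map_smul' _ _ := by simp },
    fun a b => ?_, fun x => ?_⟩
  · simp only [LinearMap.coe_mk, AddHom.coe_mk, map_mul, TrivSqZeroExt.snd_mul, hF]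
    simp [add_comm]
  · simp only [LinearMap.coe_mk, AddHom.coe_mk, F, lift_ι_apply]
    exact zero_add _

end Enveloping

section TensorCycle

variable (R A : Type*) [CommRing R] [Ring A] [Algebra R A]

noncomputable def tensorCycle : A ⊗[R] (A ⊗[R] A) ≃ₐ[R] A ⊗[R] (A ⊗[R] A) :=
  (Algebra.TensorProduct.comm R A (A ⊗[R] A)).trans (Algebra.TensorProduct.assoc R R R A A A)

variable {R A}

@[simp]
theorem tensorCycle_tmul (a b c : A) :
    tensorCycle R A (a ⊗ₜ (b ⊗ₜ c)) = b ⊗ₜ (c ⊗ₜ a) := rfl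

theorem tensorCycle_tensorCycle_tensorCycle (t : A ⊗[R] (A ⊗[R] A)) :
    tensorCycle R A (tensorCycle R A (tensorCycle R A t)) = t := by
  have : ((tensorCycle R A).trans ((tensorCycle R A).trans (tensorCycle R A))).toLinearMap =
      LinearMap.id := TensorProduct.ext_threefold' fun a b c => rfl
  exact LinearMap.congr_fun this t

theorem comm_eq_tensorCycle_tensorCycle_assoc (t : (A ⊗[R] A) ⊗[R] A) :
    TensorProduct.comm R (A ⊗[R] A) A t =
      tensorCycle R A (tensorCycle R A (TensorProduct.assoc R A A A t)) := by
  have : (TensorProduct.comm R (A ⊗[R] A) A).toLinearMap = ((tensorCycle R A).trans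
      (tensorCycle R A)).toLinearMap ∘ₗ (TensorProduct.assoc R A A A).toLinearMap :=
    TensorProduct.ext_threefold fun a b c => rfl
  exact LinearMap.congr_fun this t

theorem lTensor_comm_assoc (t : (A ⊗[R] A) ⊗[R] A) :
    (TensorProduct.comm R A A).toLinearMap.lTensor A (TensorProduct.assoc R A A A t) =
      tensorCycle R A (TensorProduct.assoc R A A A
        ((TensorProduct.comm R A A).toLinearMap.rTensor A t)) := by
  have : (TensorProduct.comm R A A).toLinearMap.lTensor A ∘ₗ
      (TensorProduct.assoc R A A A).toLinearMap = (tensorCycle R A).toLinearMap ∘ₗ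
      (TensorProduct.assoc R A A A).toLinearMap ∘ₗ
        (TensorProduct.comm R A A).toLinearMap.rTensor A :=
    TensorProduct.ext_threefold fun a b c => rfl
  exact LinearMap.congr_fun this t

noncomputable def comul₃ (Δ : A →ₐ[R] A ⊗[R] A) : A →ₐ[R] A ⊗[R] (A ⊗[R] A) :=
  (Algebra.TensorProduct.map (AlgHom.id R A) Δ).comp Δ

theorem comul₃_apply (Δ : A →ₐ[R] A ⊗[R] A) (u : A) :
    comul₃ Δ u = Algebra.TensorProduct.map (AlgHom.id R A) Δ (Δ u) := rfl

noncomputable def rTensorComul (Δ : A →ₐ[R] A ⊗[R] A) (D : A →ₗ[R] A ⊗[R] A) :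
    A →ₗ[R] A ⊗[R] (A ⊗[R] A) :=
  (TensorProduct.assoc R A A A).toLinearMap ∘ₗ D.rTensor A ∘ₗ Δ.toLinearMap

section CyclicCrossTerm

variable {S F : Type*} [Ring S] [FunLike F S S] [RingHomClass F S S]

def cyclicCrossTerm (c : F) (p q : S) : S :=
  (p - c p) * c (c q) + c (c p) * (q - c q)

theorem cyclicCrossTerm_add_map_add_map_map {c : F} (hc : ∀ s, c (c (c s)) = s) (p q : S) :
    cyclicCrossTerm c p q + c (cyclicCrossTerm c p q) + c (c (cyclicCrossTerm c p q)) = 0 := by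
  simp only [cyclicCrossTerm, map_add, map_sub, map_mul, hc, sub_mul, mul_sub]
  abel

end CyclicCrossTerm

noncomputable def coJacobiator (D : A →ₗ[R] A ⊗[R] A) : A →ₗ[R] A ⊗[R] (A ⊗[R] A) :=
  D.lTensor A ∘ₗ D + (tensorCycle R A).toLinearMap ∘ₗ D.lTensor A ∘ₗ D +
    (tensorCycle R A).toLinearMap ∘ₗ (tensorCycle R A).toLinearMap ∘ₗ D.lTensor A ∘ₗ D

section CoPoissonIdentities

variable {Δ : A →ₐ[R] A ⊗[R] A} {D : A →ₗ[R] A ⊗[R] A}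

theorem lTensor_apply_comul
    (hΔ : (Algebra.TensorProduct.comm R A A : A ⊗[R] A →ₐ[R] A ⊗[R] A).comp Δ = Δ) (u : A) :
    D.lTensor A (Δ u) = tensorCycle R A (tensorCycle R A (rTensorComul Δ D u)) := by
  have h : TensorProduct.comm R A A (Δ u) = Δ u := DFunLike.congr_fun hΔ u
  rw [← h, LinearMap.lTensor_comm, comm_eq_tensorCycle_tensorCycle_assoc]
  rfl

theorem lTensor_comm_rTensorComul (hD : (TensorProduct.comm R A A).toLinearMap ∘ₗ D = -D)
    (u : A) :
    (TensorProduct.comm R A A).toLinearMap.lTensor A (rTensorComul Δ D u) =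
      -tensorCycle R A (rTensorComul Δ D u) := by
  rw [rTensorComul, LinearMap.comp_apply, LinearMap.comp_apply, LinearEquiv.coe_coe,
    lTensor_comm_assoc, ← LinearMap.rTensor_comp_apply, hD, LinearMap.rTensor_neg,
    LinearMap.neg_apply, map_neg, map_neg]

theorem IsDerivationAlong.lTensor_apply_mul (hD : IsDerivationAlong Δ D)
    (hΔ : (Algebra.TensorProduct.comm R A A : A ⊗[R] A →ₐ[R] A ⊗[R] A).comp Δ = Δ)
    (hskew : (TensorProduct.comm R A A).toLinearMap ∘ₗ D = -D)
    (hcoLeib : Δ.toLinearMap.lTensor A ∘ₗ D = rTensorComul Δ D +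
      (TensorProduct.comm R A A).toLinearMap.lTensor A ∘ₗ rTensorComul Δ D) (a b : A) :
    D.lTensor A (D (a * b)) = D.lTensor A (D a) * comul₃ Δ b +
      cyclicCrossTerm (tensorCycle R A) (rTensorComul Δ D a) (rTensorComul Δ D b) +
      comul₃ Δ a * D.lTensor A (D b) := by
  have hΔD : ∀ u, Δ.toLinearMap.lTensor A (D u) =
      rTensorComul Δ D u - tensorCycle R A (rTensorComul Δ D u) := fun u => by
    rw [← LinearMap.comp_apply (Δ.toLinearMap.lTensor A), hcoLeib, LinearMap.add_apply,
      LinearMap.comp_apply, lTensor_comm_rTensorComul hskew, sub_eq_add_neg]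
  rw [hD a b, map_add, hD.lTensor, hD.lTensor, comul₃_apply, comul₃_apply]
  change _ + Δ.toLinearMap.lTensor A (D a) * D.lTensor A (Δ b) +
    (D.lTensor A (Δ a) * Δ.toLinearMap.lTensor A (D b) + _) = _
  rw [hΔD, hΔD, lTensor_apply_comul hΔ, lTensor_apply_comul hΔ, cyclicCrossTerm]
  abel

theorem isDerivationAlong_coJacobiator (hD : IsDerivationAlong Δ D)
    (hΔ : (Algebra.TensorProduct.comm R A A : A ⊗[R] A →ₐ[R] A ⊗[R] A).comp Δ = Δ)
    (hΔ₃ : (tensorCycle R A : _ →ₐ[R] A ⊗[R] (A ⊗[R] A)).comp (comul₃ Δ) = comul₃ Δ)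
    (hskew : (TensorProduct.comm R A A).toLinearMap ∘ₗ D = -D)
    (hcoLeib : Δ.toLinearMap.lTensor A ∘ₗ D = rTensorComul Δ D +
      (TensorProduct.comm R A A).toLinearMap.lTensor A ∘ₗ rTensorComul Δ D) :
    IsDerivationAlong (comul₃ Δ) (coJacobiator D) := by
  intro a b
  have hc : ∀ u, tensorCycle R A (comul₃ Δ u) = comul₃ Δ u := DFunLike.congr_fun hΔ₃
  simp only [coJacobiator, LinearMap.add_apply, LinearMap.comp_apply, AlgEquiv.toLinearMap_apply,
    hD.lTensor_apply_mul hΔ hskew hcoLeib a b, map_add, map_mul, hc, add_mul, mul_add]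
  rw [← sub_eq_zero, ← cyclicCrossTerm_add_map_add_map_map tensorCycle_tensorCycle_tensorCycle]
  abel

end CoPoissonIdentities

end TensorCycle

section CoPoisson

open UniversalEnvelopingAlgebra

omit [CharZero k]

local notation "𝒰" => UniversalEnvelopingAlgebra k L

variable {k L}

noncomputable def tensorι : L ⊗[k] L →ₗ[k] 𝒰 ⊗[k] 𝒰 :=
  TensorProduct.map (ι k : L →ₗ⁅k⁆ 𝒰).toLinearMap (ι k : L →ₗ⁅k⁆ 𝒰).toLinearMap

theorem tensorι_adT (x : L) (t : L ⊗[k] L) :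
    tensorι (adT k L x t) = ⁅(ι k x : 𝒰) ⊗ₜ[k] (1 : 𝒰) + 1 ⊗ₜ ι k x, tensorι t⁆ := by
  induction t with
  | zero => simp
  | add t t' ht ht' => simp only [map_add, ht, ht', lie_add]
  | tmul a b =>
    simp only [adT, lieBr, tensorι, LinearMap.add_apply, LinearMap.comp_apply,
      LinearMap.coe_rTensorHom, LinearMap.coe_lTensorHom, LinearMap.rTensor_tmul,
      LinearMap.lTensor_tmul, LieHom.coe_toLinearMap, LieAlgebra.ad_apply, map_add,
      TensorProduct.map_tmul, LieHom.map_lie, LieRing.of_associative_ring_bracket, add_mul,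
      mul_add, Algebra.TensorProduct.tmul_mul_tmul, TensorProduct.sub_tmul,
      TensorProduct.tmul_sub, one_mul, mul_one]
    abel

theorem comm_tensorι (t : L ⊗[k] L) :
    TensorProduct.comm k 𝒰 𝒰 (tensorι t) = tensorι (TensorProduct.comm k L L t) := by
  induction t with
  | zero => simp
  | add t t' ht ht' => simp only [map_add, ht, ht']
  | tmul a b => rfl

theorem tensorCycle_map_tensorι (w : L ⊗[k] (L ⊗[k] L)) :
    tensorCycle k 𝒰 (TensorProduct.map (ι k : L →ₗ⁅k⁆ 𝒰).toLinearMap tensorι w) =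
      TensorProduct.map (ι k : L →ₗ⁅k⁆ 𝒰).toLinearMap tensorι (cyc k L w) := by
  have : (tensorCycle k 𝒰).toLinearMap ∘ₗ
      TensorProduct.map (ι k : L →ₗ⁅k⁆ 𝒰).toLinearMap tensorι =
      TensorProduct.map (ι k : L →ₗ⁅k⁆ 𝒰).toLinearMap tensorι ∘ₗ cyc k L :=
    TensorProduct.ext_threefold' fun a b c => rfl
  exact LinearMap.congr_fun this w

def IsStandardComul (Δ : 𝒰 →ₐ[k] 𝒰 ⊗[k] 𝒰) : Prop :=
  ∀ x : L, Δ (ι k x) = (ι k x : 𝒰) ⊗ₜ[k] (1 : 𝒰) + 1 ⊗ₜ ι k x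

variable {Δ : UniversalEnvelopingAlgebra k L →ₐ[k]
  UniversalEnvelopingAlgebra k L ⊗[k] UniversalEnvelopingAlgebra k L}
  {δ : L →ₗ[k] L ⊗[k] L} {D : UniversalEnvelopingAlgebra k L →ₗ[k]
  UniversalEnvelopingAlgebra k L ⊗[k] UniversalEnvelopingAlgebra k L}

theorem exists_isDerivationAlong_extending (hΔ : IsStandardComul Δ) (hδ : IsCocycle k L δ) :
    ∃ D, IsDerivationAlong Δ D ∧ ∀ x, D (ι k x) = tensorι (δ x) :=
  exists_isDerivationAlong_ι_eq (tensorι ∘ₗ δ) fun x y => by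
    rw [LinearMap.comp_apply, hδ x y, map_sub, tensorι_adT, tensorι_adT, ← hΔ x, ← hΔ y]
    rfl

theorem comm_comp_comul (hΔ : IsStandardComul Δ) :
    (Algebra.TensorProduct.comm k 𝒰 𝒰 : 𝒰 ⊗[k] 𝒰 →ₐ[k] 𝒰 ⊗[k] 𝒰).comp Δ = Δ :=
  algHom_ext_ι fun x => by simp [hΔ x, add_comm, -ι_apply]

theorem assoc_comp_map_comul (hΔ : IsStandardComul Δ) :
    (Algebra.TensorProduct.assoc k k k 𝒰 𝒰 𝒰 : _ →ₐ[k] 𝒰 ⊗[k] (𝒰 ⊗[k] 𝒰)).comp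
      ((Algebra.TensorProduct.map Δ (AlgHom.id k 𝒰)).comp Δ) = comul₃ Δ :=
  algHom_ext_ι fun x => by
    simp [comul₃, hΔ x, TensorProduct.add_tmul, TensorProduct.tmul_add,
      Algebra.TensorProduct.one_def, -ι_apply]
    abel

theorem comul₃_ι (hΔ : IsStandardComul Δ) (x : L) :
    comul₃ Δ (ι k x) =
      ι k x ⊗ₜ[k] ((1 : 𝒰) ⊗ₜ[k] (1 : 𝒰)) + 1 ⊗ₜ (ι k x ⊗ₜ 1) + 1 ⊗ₜ (1 ⊗ₜ ι k x) := by
  simp [comul₃, hΔ x, TensorProduct.tmul_add, Algebra.TensorProduct.one_def, add_assoc, -ι_apply]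

theorem tensorCycle_comp_comul₃ (hΔ : IsStandardComul Δ) :
    (tensorCycle k 𝒰 : _ →ₐ[k] 𝒰 ⊗[k] (𝒰 ⊗[k] 𝒰)).comp (comul₃ Δ) = comul₃ Δ :=
  algHom_ext_ι fun x => by
    simp [comul₃_ι hΔ, -ι_apply]
    abel

theorem map_comm_comp_comul₃ (hΔ : IsStandardComul Δ) :
    (Algebra.TensorProduct.map (AlgHom.id k 𝒰)
      (Algebra.TensorProduct.comm k 𝒰 𝒰 : 𝒰 ⊗[k] 𝒰 →ₐ[k] 𝒰 ⊗[k] 𝒰)).comp (comul₃ Δ) =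
      comul₃ Δ :=
  algHom_ext_ι fun x => by
    simp [comul₃_ι hΔ, -ι_apply]
    abel

theorem comm_comp_eq_neg (hΔ : IsStandardComul Δ) (hD : IsDerivationAlong Δ D)
    (hDι : ∀ x, D (ι k x) = tensorι (δ x)) (hδ : IsCoSkew k L δ) :
    (TensorProduct.comm k 𝒰 𝒰).toLinearMap ∘ₗ D = -D := by
  have h := hD.algHom_comp (Algebra.TensorProduct.comm k 𝒰 𝒰 : 𝒰 ⊗[k] 𝒰 →ₐ[k] 𝒰 ⊗[k] 𝒰)
  rw [comm_comp_comul hΔ] at h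
  refine h.ext_ι hD.neg fun x => ?_
  simp [hDι, comm_tensorι, hδ x, -ι_apply]

theorem isDerivationAlong_rTensorComul (hΔ : IsStandardComul Δ) (hD : IsDerivationAlong Δ D) :
    IsDerivationAlong (comul₃ Δ) (rTensorComul Δ D) := by
  have h := (hD.rTensor.algHom_comp
    (Algebra.TensorProduct.assoc k k k 𝒰 𝒰 𝒰 : _ →ₐ[k] 𝒰 ⊗[k] (𝒰 ⊗[k] 𝒰))).comp_algHom Δ
  rwa [AlgHom.comp_assoc, assoc_comp_map_comul hΔ] at h

theorem rTensorComul_ι (hΔ : IsStandardComul Δ) (hD : IsDerivationAlong Δ D)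
    (hDι : ∀ x, D (ι k x) = tensorι (δ x)) (x : L) :
    rTensorComul Δ D (ι k x) = TensorProduct.assoc k 𝒰 𝒰 𝒰 (tensorι (δ x) ⊗ₜ 1) := by
  simp [rTensorComul, hΔ x, hDι, hD.map_one, -ι_apply]

theorem lTensor_comul_tensorι (hΔ : IsStandardComul Δ) (t : L ⊗[k] L) :
    Δ.toLinearMap.lTensor 𝒰 (tensorι t) = TensorProduct.assoc k 𝒰 𝒰 𝒰 (tensorι t ⊗ₜ 1) +
      (TensorProduct.comm k 𝒰 𝒰).toLinearMap.lTensor 𝒰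
        (TensorProduct.assoc k 𝒰 𝒰 𝒰 (tensorι t ⊗ₜ 1)) := by
  induction t with
  | zero => simp
  | add t t' ht ht' => simp only [map_add, TensorProduct.add_tmul, ht, ht']; abel
  | tmul a b => simp [tensorι, hΔ b, TensorProduct.tmul_add, -ι_apply]

theorem lTensor_comul_comp (hΔ : IsStandardComul Δ) (hD : IsDerivationAlong Δ D)
    (hDι : ∀ x, D (ι k x) = tensorι (δ x)) :
    Δ.toLinearMap.lTensor 𝒰 ∘ₗ D = rTensorComul Δ D +
      (TensorProduct.comm k 𝒰 𝒰).toLinearMap.lTensor 𝒰 ∘ₗ rTensorComul Δ D := by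
  have hP := isDerivationAlong_rTensorComul hΔ hD
  have hσP := hP.algHom_comp (Algebra.TensorProduct.map (AlgHom.id k 𝒰)
    (Algebra.TensorProduct.comm k 𝒰 𝒰 : 𝒰 ⊗[k] 𝒰 →ₐ[k] 𝒰 ⊗[k] 𝒰))
  rw [map_comm_comp_comul₃ hΔ] at hσP
  refine (hD.algHom_comp (Algebra.TensorProduct.map (AlgHom.id k 𝒰) Δ)).ext_ι (hP.add hσP)
    fun x => ?_
  simp only [LinearMap.comp_apply, LinearMap.add_apply, rTensorComul_ι hΔ hD hDι, hDι]
  exact lTensor_comul_tensorι hΔ (δ x)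

theorem lTensor_tensorι (hDι : ∀ x, D (ι k x) = tensorι (δ x)) (t : L ⊗[k] L) :
    D.lTensor 𝒰 (tensorι t) =
      TensorProduct.map (ι k : L →ₗ⁅k⁆ 𝒰).toLinearMap tensorι (δ.lTensor L t) := by
  induction t with
  | zero => simp
  | add t t' ht ht' => simp only [map_add, ht, ht']
  | tmul a b => exact congr_arg (ι k a ⊗ₜ ·) (hDι b)

theorem coJacobiator_eq_zero (hΔ : IsStandardComul Δ) (hD : IsDerivationAlong Δ D)
    (hDι : ∀ x, D (ι k x) = tensorι (δ x)) (hskew : IsCoSkew k L δ) (hcoJac : IsCoJacobi k L δ) :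
    coJacobiator D = 0 := by
  refine (isDerivationAlong_coJacobiator hD (comm_comp_comul hΔ) (tensorCycle_comp_comul₃ hΔ)
    (comm_comp_eq_neg hΔ hD hDι hskew) (lTensor_comul_comp hΔ hD hDι)).ext_ι
      IsDerivationAlong.zero fun x => ?_
  simp only [coJacobiator, LinearMap.add_apply, LinearMap.comp_apply, AlgEquiv.toLinearMap_apply,
    hDι, lTensor_tensorι hDι, tensorCycle_map_tensorι, ← map_add, hcoJac x, map_zero,
    LinearMap.zero_apply]

end CoPoisson

theorem stmt4 (δ : L →ₗ[k] L ⊗[k] L) (hδ : IsLieCobracket k L δ)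
    (Δ : UniversalEnvelopingAlgebra k L →ₐ[k]
      (UniversalEnvelopingAlgebra k L) ⊗[k] (UniversalEnvelopingAlgebra k L))
    (hΔ : ∀ x : L, Δ (UniversalEnvelopingAlgebra.ι k x) =
      (UniversalEnvelopingAlgebra.ι k x) ⊗ₜ 1 + 1 ⊗ₜ (UniversalEnvelopingAlgebra.ι k x)) :
    ∃ D : UniversalEnvelopingAlgebra k L →ₗ[k]
        (UniversalEnvelopingAlgebra k L) ⊗[k] (UniversalEnvelopingAlgebra k L),
      -- D extends δ :
      (∀ x : L, D (UniversalEnvelopingAlgebra.ι k x) =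
        (TensorProduct.map (UniversalEnvelopingAlgebra.ι k : L →ₗ⁅k⁆ _).toLinearMap
          (UniversalEnvelopingAlgebra.ι k : L →ₗ⁅k⁆ _).toLinearMap) (δ x)) ∧
      -- co-skew-symmetry :
      (∀ u, (TensorProduct.comm k _ _) (D u) = -(D u)) ∧
      -- the Leibniz compatibility δ(ab) = δ(a)Δ(b) + Δ(a)δ(b) :
      (∀ a b, D (a * b) = (D a) * (Δ b) + (Δ a) * (D b)) ∧
      -- the co-Leibniz rule (1⊗Δ)∘D = (D⊗1)∘Δ + σ₂₃∘(D⊗1)∘Δ :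
      (∀ u, (LinearMap.lTensor _ Δ.toLinearMap) (D u) =
        (TensorProduct.assoc k _ _ _).toLinearMap ((LinearMap.rTensor _ D) (Δ u)) +
          (LinearMap.lTensor _ (TensorProduct.comm k _ _).toLinearMap)
            ((TensorProduct.assoc k _ _ _).toLinearMap
              ((LinearMap.rTensor _ D) (Δ u)))) ∧
      -- the co-Jacobi identity :
      (∀ u, (LinearMap.lTensor _ D) (D u) +
        ((TensorProduct.assoc k _ _ _).toLinearMap ∘ₗ
          (TensorProduct.comm k _ _).toLinearMap) ((LinearMap.lTensor _ D) (D u)) +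
        ((TensorProduct.assoc k _ _ _).toLinearMap ∘ₗ
          (TensorProduct.comm k _ _).toLinearMap)
          (((TensorProduct.assoc k _ _ _).toLinearMap ∘ₗ
            (TensorProduct.comm k _ _).toLinearMap)
            ((LinearMap.lTensor _ D) (D u))) = 0) := by
  obtain ⟨hskew, hcocycle, hcoJac⟩ := hδ
  obtain ⟨D, hD, hDι⟩ := exists_isDerivationAlong_extending hΔ hcocycle
  refine ⟨D, hDι, fun u => LinearMap.congr_fun (comm_comp_eq_neg hΔ hD hDι hskew) u, hD,
    fun u => LinearMap.congr_fun (lTensor_comul_comp hΔ hD hDι) u,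
    fun u => LinearMap.congr_fun (coJacobiator_eq_zero hΔ hD hDι hskew hcoJac) u⟩
end

section
/- Let a be a finite-dimensional Lie algebra over a field k, together with a Lie algebra structure on a*. Define on D(a) = a ⊕ a* the skew-symmetric bracket extending the brackets of a and a* by [x, ξ] = ad*_a(x)(ξ) − ad*_{a*}(ξ)(x) for x ∈ a, ξ ∈ a*. Then this bracket satisfies the Jacobi identity if and only if the cobracket δ: a → a ∧ a dual to the bracket on a* makes (a, [·,·], δ) a Lie bialgebra. -/
/- STATEMENT 5: Let a be a finite-dimensional Lie algebra over a field k,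
together with a Lie algebra structure β on a*.  The skew-symmetric bracket on
D(a) = a ⊕ a* extending the brackets of a and a* by
[x,ξ] = ad*_a(x)(ξ) − ad*_{a*}(ξ)(x) satisfies the Jacobi identity if and
only if the cobracket δ : a → a ⊗ a dual to β satisfies the cocycle identity
δ([x,y]) = [δ(x), y⊗1+1⊗y] + [x⊗1+1⊗x, δ(y)], i.e. makes (a,[·,·],δ) a Lie
bialgebra (β being a Lie bracket already accounts for the other axioms). -/

open TensorProduct

variable (k : Type*) [Field k] [CharZero k]
variable (L : Type*) [LieRing L] [LieAlgebra k L]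

attribute [local instance 100] LieRing.ofAssociativeRing

variable [FiniteDimensional k L]

/-- The coadjoint action of `a` on `a*` : `(x·η)(y) = −η([x,y])`. -/
noncomputable def coadA (x : L) (η : Module.Dual k L) : Module.Dual k L :=
  -(η ∘ₗ ((LieAlgebra.ad k L) x))

/-- The coadjoint action of `a*` on `a = (a*)*` :
`(ξ·x)` is the element of `a` with `⟨ξ·x, η⟩ = −(ev x)(β ξ η)`. -/
noncomputable def coadD (β : Module.Dual k L →ₗ[k] Module.Dual k L →ₗ[k] Module.Dual k L)
    (ξ : Module.Dual k L) (x : L) : L :=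
  (Module.evalEquiv k L).symm (-(((Module.Dual.eval k L) x) ∘ₗ (β ξ)))

/-- The bracket of the double `D(a) = a ⊕ a*`. -/
noncomputable def doubleBracket
    (β : Module.Dual k L →ₗ[k] Module.Dual k L →ₗ[k] Module.Dual k L)
    (p q : L × Module.Dual k L) : L × Module.Dual k L :=
  (⁅p.1, q.1⁆ - coadD k L β q.2 p.1 + coadD k L β p.2 q.1,
    β p.2 q.2 + coadA k L p.1 q.2 - coadA k L q.1 p.2)

/-- The cobracket `δ : a → a ⊗ a` dual to the bracket `β` on `a*`. -/
noncomputable def dualCobracket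
    (β : Module.Dual k L →ₗ[k] Module.Dual k L →ₗ[k] Module.Dual k L) :
    L →ₗ[k] L ⊗[k] L :=
  (TensorProduct.congr (Module.evalEquiv k L).symm
      (Module.evalEquiv k L).symm).toLinearMap ∘ₗ
    (TensorProduct.dualDistribEquiv k (Module.Dual k L)
        (Module.Dual k L)).symm.toLinearMap ∘ₗ
    (LinearMap.dualMap (TensorProduct.lift β)) ∘ₗ
    (Module.evalEquiv k L).toLinearMap

/-! The Jacobiator `J` of the double bracket is additive in each argument and cyclically
invariant, so it vanishes iff it vanishes on triples of the shapes `(a, a, a)`, `(a, a, a*)`,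
`(a, a*, a*)`, `(a*, a*, a*)`. On the pure shapes it is the Jacobiator of `a`, resp. of `a*`.
On `(x, y, ζ)` the `a*`-component vanishes since the coadjoint action is a representation, and the
`a`-component paired with `θ` is, up to sign, the pairing of `ζ ⊗ θ` with the cocycle defect
`δ⁅x, y⁆ - [x ⊗ 1 + 1 ⊗ x, δ y] + [y ⊗ 1 + 1 ⊗ y, δ x]`. On `(x, η, ζ)` the `a`-component vanishes
by the Jacobi identity of `a*`, and, since `β` is alternating, the `a*`-component evaluated at `w`
is, up to sign, the pairing of `η ⊗ ζ` with the cocycle defect at `(x, w)`. -/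

section

open Module TensorProduct

theorem TensorProduct.eq_zero_of_forall_dualDistrib_tmul_eq_zero {R M N : Type*}
    [CommSemiring R] [AddCommMonoid M] [Module R M] [Module.Free R M] [Module.Finite R M]
    [AddCommMonoid N] [Module R N] [Module.Free R N] [Module.Finite R N] {t : M ⊗[R] N}
    (h : ∀ (f : Dual R M) (g : Dual R N), dualDistrib R M N (f ⊗ₜ g) t = 0) : t = 0 := by
  refine (forall_dual_apply_eq_zero_iff R t).1 fun φ ↦ ?_
  obtain ⟨s, rfl⟩ := (dualDistribEquiv R M N).surjective φ
  induction s using TensorProduct.induction_on with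
  | zero => simp
  | tmul f g => exact h f g
  | add s s' hs hs' => simp_all

theorem TensorProduct.dualDistrib_congr_evalEquiv_symm {R M N : Type*} [CommSemiring R]
    [AddCommMonoid M] [Module R M] [IsReflexive R M] [AddCommMonoid N] [Module R N]
    [IsReflexive R N] (f : Dual R M) (g : Dual R N)
    (s : Dual R (Dual R M) ⊗[R] Dual R (Dual R N)) :
    dualDistrib R M N (f ⊗ₜ g) (congr (evalEquiv R M).symm (evalEquiv R N).symm s) =
      dualDistrib R (Dual R M) (Dual R N) s (f ⊗ₜ g) := by
  induction s using TensorProduct.induction_on with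
  | zero => simp
  | tmul F G => simp [apply_evalEquiv_symm_apply]
  | add s s' hs hs' => simp_all

end

section

open Module LinearMap TensorProduct

variable {k : Type*} [Field k] {L : Type*} [LieRing L] [LieAlgebra k L]

theorem coadA_add_left (x x' : L) (η : Dual k L) :
    coadA k L (x + x') η = coadA k L x η + coadA k L x' η := by
  simp only [coadA, map_add, comp_add, neg_add]

theorem coadA_add_right (x : L) (η η' : Dual k L) :
    coadA k L x (η + η') = coadA k L x η + coadA k L x η' := by
  simp only [coadA, add_comp, neg_add]

theorem coadA_neg_left (x : L) (η : Dual k L) : coadA k L (-x) η = -coadA k L x η := by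
  simp only [coadA, map_neg, comp_neg]

theorem coadA_neg_right (x : L) (η : Dual k L) : coadA k L x (-η) = -coadA k L x η := by
  simp only [coadA, neg_comp]

theorem coadA_lie (x y : L) (η : Dual k L) :
    coadA k L ⁅x, y⁆ η = coadA k L x (coadA k L y η) - coadA k L y (coadA k L x η) := by
  ext w
  simp [coadA]

@[simp] theorem coadA_zero_left (η : Dual k L) : coadA k L 0 η = 0 := by
  simp [coadA]

@[simp] theorem coadA_zero_right (x : L) : coadA k L x 0 = 0 := by
  simp [coadA]

theorem dualDistrib_adT (ξ η : Dual k L) (x : L) (t : L ⊗[k] L) :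
    dualDistrib k L L (ξ ⊗ₜ η) (adT k L x t) =
      dualDistrib k L L ((ξ ∘ₗ LieAlgebra.ad k L x) ⊗ₜ η) t +
        dualDistrib k L L (ξ ⊗ₜ (η ∘ₗ LieAlgebra.ad k L x)) t := by
  induction t using TensorProduct.induction_on with
  | zero => simp
  | tmul a b => simp [adT, lieBr, dualDistrib_apply]
  | add t t' ht ht' => simp only [map_add, ht, ht']; ring

def cocycleDefect (β : Dual k L →ₗ[k] Dual k L →ₗ[k] Dual k L) (x y : L)
    (ξ η : Dual k L) : k :=
  β ξ η ⁅x, y⁆ -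
    (β (ξ ∘ₗ LieAlgebra.ad k L x) η y + β ξ (η ∘ₗ LieAlgebra.ad k L x) y -
      (β (ξ ∘ₗ LieAlgebra.ad k L y) η x + β ξ (η ∘ₗ LieAlgebra.ad k L y) x))

variable [FiniteDimensional k L] {β : Dual k L →ₗ[k] Dual k L →ₗ[k] Dual k L}

theorem apply_coadD (ξ θ : Dual k L) (x : L) : θ (coadD k L β ξ x) = -β ξ θ x := by
  simp [coadD, apply_evalEquiv_symm_apply]

theorem apply_lie_coadD (ξ θ : Dual k L) (x y : L) :
    θ ⁅x, coadD k L β ξ y⁆ = -β ξ (θ ∘ₗ LieAlgebra.ad k L x) y :=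
  apply_coadD ξ (θ ∘ₗ LieAlgebra.ad k L x) y

theorem apply_coadD_lie (ξ θ : Dual k L) (x y : L) :
    θ ⁅coadD k L β ξ x, y⁆ = β ξ (θ ∘ₗ LieAlgebra.ad k L y) x := by
  rw [← lie_skew, map_neg, apply_lie_coadD, neg_neg]

theorem coadD_add_left (ξ ξ' : Dual k L) (x : L) :
    coadD k L β (ξ + ξ') x = coadD k L β ξ x + coadD k L β ξ' x := by
  simp only [coadD, map_add, comp_add, neg_add]

theorem coadD_add_right (ξ : Dual k L) (x x' : L) :
    coadD k L β ξ (x + x') = coadD k L β ξ x + coadD k L β ξ x' := by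
  simp only [coadD, map_add, add_comp, neg_add]

theorem coadD_neg_left (ξ : Dual k L) (x : L) : coadD k L β (-ξ) x = -coadD k L β ξ x := by
  simp only [coadD, map_neg, comp_neg, neg_neg]

theorem coadD_neg_right (ξ : Dual k L) (x : L) : coadD k L β ξ (-x) = -coadD k L β ξ x := by
  simp only [coadD, map_neg, neg_comp, neg_neg]

@[simp] theorem coadD_zero_left (x : L) : coadD k L β 0 x = 0 := by
  simp [coadD]

@[simp] theorem coadD_zero_right (ξ : Dual k L) : coadD k L β ξ 0 = 0 := by
  simp [coadD]

theorem doubleBracket_add_left (p p' q : L × Dual k L) :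
    doubleBracket k L β (p + p') q = doubleBracket k L β p q + doubleBracket k L β p' q := by
  simp only [doubleBracket, Prod.fst_add, Prod.snd_add, coadD_add_left, coadD_add_right,
    coadA_add_left, coadA_add_right, add_lie, map_add, LinearMap.add_apply, Prod.mk_add_mk,
    Prod.mk.injEq]
  constructor <;> abel

theorem doubleBracket_add_right (p q q' : L × Dual k L) :
    doubleBracket k L β p (q + q') = doubleBracket k L β p q + doubleBracket k L β p q' := by
  simp only [doubleBracket, Prod.fst_add, Prod.snd_add, coadD_add_left, coadD_add_right,
    coadA_add_left, coadA_add_right, lie_add, map_add, Prod.mk_add_mk, Prod.mk.injEq]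
  constructor <;> abel

@[simp] theorem doubleBracket_inl_left (x : L) (q : L × Dual k L) :
    doubleBracket k L β (x, 0) q = (⁅x, q.1⁆ - coadD k L β q.2 x, coadA k L x q.2) := by
  simp [doubleBracket]

@[simp] theorem doubleBracket_inr_left (ξ : Dual k L) (q : L × Dual k L) :
    doubleBracket k L β (0, ξ) q = (coadD k L β ξ q.1, β ξ q.2 - coadA k L q.1 ξ) := by
  simp [doubleBracket]

theorem dualDistrib_dualCobracket (ξ η : Dual k L) (x : L) :
    dualDistrib k L L (ξ ⊗ₜ η) (dualCobracket k L β x) = β ξ η x := by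
  have hequiv : dualDistrib k (Dual k L) (Dual k L) =
      (dualDistribEquiv k (Dual k L) (Dual k L)).toLinearMap := rfl
  simp only [dualCobracket, LinearMap.comp_apply, LinearEquiv.coe_coe,
    dualDistrib_congr_evalEquiv_symm, hequiv, LinearEquiv.apply_symm_apply]
  simp

theorem dualDistrib_dualCobracket_lie_sub (x y : L) (ξ η : Dual k L) :
    dualDistrib k L L (ξ ⊗ₜ η) (dualCobracket k L β ⁅x, y⁆ -
      (adT k L x (dualCobracket k L β y) - adT k L y (dualCobracket k L β x))) =
      cocycleDefect β x y ξ η := by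
  simp only [map_sub, dualDistrib_adT, dualDistrib_dualCobracket, cocycleDefect]

theorem isCocycle_dualCobracket_iff :
    IsCocycle k L (dualCobracket k L β) ↔ ∀ x y ξ η, cocycleDefect β x y ξ η = 0 := by
  refine forall₂_congr fun x y ↦ ?_
  rw [← sub_eq_zero]
  constructor
  · intro h ξ η
    rw [← dualDistrib_dualCobracket_lie_sub, h, map_zero]
  · intro h
    exact eq_zero_of_forall_dualDistrib_tmul_eq_zero fun ξ η ↦ by
      rw [dualDistrib_dualCobracket_lie_sub, h]

variable (β) in
noncomputable def jacobiator (p q s : L × Dual k L) : L × Dual k L :=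
  doubleBracket k L β p (doubleBracket k L β q s) +
    doubleBracket k L β q (doubleBracket k L β s p) +
    doubleBracket k L β s (doubleBracket k L β p q)

theorem jacobiator_rotate (p q s : L × Dual k L) :
    jacobiator β p q s = jacobiator β q s p := by
  simp only [jacobiator]
  abel

theorem jacobiator_add_left (p p' q s : L × Dual k L) :
    jacobiator β (p + p') q s = jacobiator β p q s + jacobiator β p' q s := by
  simp only [jacobiator, doubleBracket_add_left, doubleBracket_add_right]
  abel

theorem jacobiator_add_middle (p q q' s : L × Dual k L) :
    jacobiator β p (q + q') s = jacobiator β p q s + jacobiator β p q' s := by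
  rw [jacobiator_rotate p, jacobiator_add_left, jacobiator_rotate p, jacobiator_rotate p]

theorem jacobiator_add_right (p q s s' : L × Dual k L) :
    jacobiator β p q (s + s') = jacobiator β p q s + jacobiator β p q s' := by
  rw [← jacobiator_rotate (s + s'), jacobiator_add_left, jacobiator_rotate s,
    jacobiator_rotate s']

theorem jacobiator_eq_zero_of_homogeneous
    (hlll : ∀ x y z : L, jacobiator β (x, 0) (y, 0) (z, 0) = 0)
    (hllr : ∀ (x y : L) (ζ : Dual k L), jacobiator β (x, 0) (y, 0) (0, ζ) = 0)
    (hlrr : ∀ (x : L) (η ζ : Dual k L), jacobiator β (x, 0) (0, η) (0, ζ) = 0)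
    (hrrr : ∀ ξ η ζ : Dual k L, jacobiator β (0, ξ) (0, η) (0, ζ) = 0)
    (p q s : L × Dual k L) : jacobiator β p q s = 0 := by
  obtain ⟨x, ξ⟩ := p
  obtain ⟨y, η⟩ := q
  obtain ⟨z, ζ⟩ := s
  have split : ∀ (w : L) (θ : Dual k L), ((w, θ) : L × Dual k L) = (w, 0) + (0, θ) := by simp
  rw [split x, split y, split z]
  simp only [jacobiator_add_left, jacobiator_add_middle, jacobiator_add_right]
  rw [jacobiator_rotate (x, 0) (0, η) (z, 0), jacobiator_rotate (0, η),
    jacobiator_rotate (0, ξ) (y, 0) (z, 0), jacobiator_rotate (0, ξ) (y, 0) (0, ζ),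
    jacobiator_rotate (0, ξ) (0, η) (z, 0), jacobiator_rotate (0, η) (z, 0)]
  simp [hlll, hllr, hlrr, hrrr]

theorem jacobiator_inl_inl_inl (x y z : L) : jacobiator β (x, 0) (y, 0) (z, 0) = 0 := by
  simp [jacobiator, lie_jacobi]

theorem jacobiator_inr_inr_inr
    (hβjac : ∀ ξ η ζ, β ξ (β η ζ) + β η (β ζ ξ) + β ζ (β ξ η) = 0) (ξ η ζ : Dual k L) :
    jacobiator β (0, ξ) (0, η) (0, ζ) = 0 := by
  simp [jacobiator, hβjac]

theorem jacobiator_inl_inl_inr (x y : L) (ζ : Dual k L) :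
    jacobiator β (x, 0) (y, 0) (0, ζ) =
      (coadD k L β ζ ⁅x, y⁆ + ⁅coadD k L β ζ y, x⁆ + ⁅y, coadD k L β ζ x⁆ -
          coadD k L β (coadA k L y ζ) x + coadD k L β (coadA k L x ζ) y,
        coadA k L x (coadA k L y ζ) - coadA k L y (coadA k L x ζ) - coadA k L ⁅x, y⁆ ζ) := by
  simp only [jacobiator, doubleBracket_inl_left, doubleBracket_inr_left, lie_zero, zero_sub,
    lie_neg, lie_skew, map_zero, coadD_neg_left, sub_neg_eq_add, coadA_neg_right, Prod.mk_add_mk,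
    coadD_zero_left, sub_zero, coadA_zero_right, Prod.mk.injEq]
  constructor <;> abel

theorem jacobiator_inl_inr_inr (x : L) (η ζ : Dual k L) :
    jacobiator β (x, 0) (0, η) (0, ζ) =
      (coadD k L β η (coadD k L β ζ x) - coadD k L β ζ (coadD k L β η x) -
          coadD k L β (β η ζ) x,
        coadA k L x (β η ζ) - β η (coadA k L x ζ) + β ζ (coadA k L x η) -
          coadA k L (coadD k L β ζ x) η + coadA k L (coadD k L β η x) ζ) := by
  simp only [jacobiator, doubleBracket_inr_left, doubleBracket_inl_left, coadD_zero_right,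
    coadA_zero_left, sub_zero, lie_zero, zero_sub, map_zero, map_neg, Prod.mk_add_mk,
    coadD_neg_right, coadA_neg_left, sub_neg_eq_add, Prod.mk.injEq]
  constructor <;> abel

theorem apply_jacobiator_inl_inl_inr_fst (x y : L) (ζ θ : Dual k L) :
    θ (jacobiator β (x, 0) (y, 0) (0, ζ)).1 = -cocycleDefect β x y ζ θ := by
  simp only [jacobiator_inl_inl_inr, map_add, map_sub, apply_coadD, apply_coadD_lie,
    apply_lie_coadD, coadA, map_neg, LinearMap.neg_apply, cocycleDefect]
  ring

theorem jacobiator_inl_inl_inr_snd (x y : L) (ζ : Dual k L) :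
    (jacobiator β (x, 0) (y, 0) (0, ζ)).2 = 0 := by
  rw [jacobiator_inl_inl_inr, coadA_lie, sub_self]

theorem jacobiator_inl_inl_inr_eq_zero_iff (x y : L) (ζ : Dual k L) :
    jacobiator β (x, 0) (y, 0) (0, ζ) = 0 ↔ ∀ θ, cocycleDefect β x y ζ θ = 0 := by
  rw [Prod.ext_iff, Prod.fst_zero, Prod.snd_zero, jacobiator_inl_inl_inr_snd, and_iff_left rfl,
    ← forall_dual_apply_eq_zero_iff k]
  simp only [apply_jacobiator_inl_inl_inr_fst, neg_eq_zero]

theorem jacobiator_inl_inr_inr_fst (hβ : β.IsAlt)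
    (hβjac : ∀ ξ η ζ, β ξ (β η ζ) + β η (β ζ ξ) + β ζ (β ξ η) = 0)
    (x : L) (η ζ : Dual k L) : (jacobiator β (x, 0) (0, η) (0, ζ)).1 = 0 := by
  refine (forall_dual_apply_eq_zero_iff k _).1 fun θ ↦ ?_
  have jac := LinearMap.congr_fun (hβjac θ η ζ) x
  simp only [LinearMap.add_apply, LinearMap.zero_apply] at jac
  simp only [jacobiator_inl_inr_inr, map_sub, apply_coadD, neg_neg]
  rw [← hβ.neg θ (β η ζ), ← hβ.neg θ η]
  simp only [map_neg, LinearMap.neg_apply]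
  linear_combination -jac

theorem apply_jacobiator_inl_inr_inr_snd (hβ : β.IsAlt) (x w : L) (η ζ : Dual k L) :
    (jacobiator β (x, 0) (0, η) (0, ζ)).2 w = -cocycleDefect β x w η ζ := by
  simp only [jacobiator_inl_inr_inr, LinearMap.add_apply, LinearMap.sub_apply, ← hβ.neg ζ,
    coadA, LinearMap.neg_apply, coe_comp, Function.comp_apply, LieAlgebra.ad_apply, apply_coadD_lie,
    map_neg, cocycleDefect]
  ring

theorem jacobiator_inl_inr_inr_eq_zero (hβ : β.IsAlt)
    (hβjac : ∀ ξ η ζ, β ξ (β η ζ) + β η (β ζ ξ) + β ζ (β ξ η) = 0)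
    (hδ : ∀ x y ξ η, cocycleDefect β x y ξ η = 0) (x : L) (η ζ : Dual k L) :
    jacobiator β (x, 0) (0, η) (0, ζ) = 0 := by
  ext1
  · exact jacobiator_inl_inr_inr_fst hβ hβjac x η ζ
  · ext w
    rw [apply_jacobiator_inl_inr_inr_snd hβ, hδ, neg_zero, Prod.snd_zero, LinearMap.zero_apply]

end

theorem stmt5
    (β : Module.Dual k L →ₗ[k] Module.Dual k L →ₗ[k] Module.Dual k L)
    (hβskew : ∀ ξ, β ξ ξ = 0)
    (hβjac : ∀ ξ η ζ, β ξ (β η ζ) + β η (β ζ ξ) + β ζ (β ξ η) = 0) :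
    (∀ p q s : L × Module.Dual k L,
        doubleBracket k L β p (doubleBracket k L β q s) +
          doubleBracket k L β q (doubleBracket k L β s p) +
          doubleBracket k L β s (doubleBracket k L β p q) = 0) ↔
      IsCocycle k L (dualCobracket k L β) := by
  rw [isCocycle_dualCobracket_iff]
  constructor
  · intro hJ x y ξ
    exact (jacobiator_inl_inl_inr_eq_zero_iff x y ξ).1 (hJ (x, 0) (y, 0) (0, ξ))
  · intro hδ
    exact jacobiator_eq_zero_of_homogeneous jacobiator_inl_inl_inl
      (fun x y ζ ↦ (jacobiator_inl_inl_inr_eq_zero_iff x y ζ).2 (hδ x y ζ))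
      (jacobiator_inl_inr_inr_eq_zero hβskew hβjac hδ)
      (jacobiator_inr_inr_inr hβjac)
end
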